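/- Let γ, α ∈ ℝ and let s, x, y, u, v : (0,∞) → ℝ with s and u differentiable, y and v twice differentiable, and x continuous, satisfying on (0,∞) the three equations (V): v'' + v'/r − v/r² + 2(2y'u + y u' + y u/r) − 4 v u² − γ v s² = 0; (U): v' y − v y' + (2y² + (γ/2) s² + 2v²) u = 0; and (Yα): y'' + y'/r − y/r² − 2(1−α)(2v'u + v u' + v u/r + 2 y u²) − γ (y − x) s² = 0. Then the integrability condition (I) holds on (0,∞): (r u (γ s² + 4α v²))' + 2r (γ x s² + 4α y u²) v = 0. -/

import Mathlib

/-!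
Equation (U) expresses `γ s² u` through `u` and the Wronskian `v' y - v y'`, so near every
`r > 0` the quantity `r u (γ s² + 4α v²)` equals
`r (4α v² u - 2 (v' y - v y') - 4 (y² + v²) u)`, in which `s` no longer occurs. Differentiating this
expression and eliminating `v''` and `y''` by (V) and (Yα) leaves exactly `-2r (γ x s² + 4α y u²) v`.
-/

open Filter Topology

section

variable {v v' v'' y y' y'' u u' : ℝ → ℝ} {r : ℝ}

theorem hasDerivAt_wronskian (hv : HasDerivAt v (v' r) r) (hv' : HasDerivAt v' (v'' r) r)
    (hy : HasDerivAt y (y' r) r) (hy' : HasDerivAt y' (y'' r) r) :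
    HasDerivAt (fun t => v' t * y t - v t * y' t) (v'' r * y r - v r * y'' r) r :=
  ((hv'.fun_mul hy).fun_sub (hv.fun_mul hy')).congr_deriv (by ring)

theorem hasDerivAt_mul_wronskian_combination (α : ℝ) (hu : HasDerivAt u (u' r) r)
    (hv : HasDerivAt v (v' r) r) (hv' : HasDerivAt v' (v'' r) r)
    (hy : HasDerivAt y (y' r) r) (hy' : HasDerivAt y' (y'' r) r) :
    HasDerivAt
      (fun t => t * (4 * α * v t ^ 2 * u t - 2 * (v' t * y t - v t * y' t)
        - 4 * (y t ^ 2 + v t ^ 2) * u t))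
      ((4 * α * v r ^ 2 * u r - 2 * (v' r * y r - v r * y' r) - 4 * (y r ^ 2 + v r ^ 2) * u r)
        + r * (8 * α * v r * v' r * u r + 4 * α * v r ^ 2 * u' r
          - 2 * (v'' r * y r - v r * y'' r)
          - 8 * (y r * y' r + v r * v' r) * u r - 4 * (y r ^ 2 + v r ^ 2) * u' r)) r := by
  have hW := hasDerivAt_wronskian hv hv' hy hy'
  have hbracket := (((hv.fun_pow 2).const_mul (4 * α)).fun_mul hu).fun_sub (hW.const_mul 2)
    |>.fun_sub ((((hy.fun_pow 2).fun_add (hv.fun_pow 2)).const_mul 4).fun_mul hu)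
  exact ((hasDerivAt_id' r).fun_mul hbracket).congr_deriv (by ring)

end

theorem statement3 (γ α : ℝ)
    (s x y y' y'' u u' v v' v'' : ℝ → ℝ)
    (hu : ∀ r ∈ Set.Ioi (0:ℝ), HasDerivAt u (u' r) r)
    (hy : ∀ r ∈ Set.Ioi (0:ℝ), HasDerivAt y (y' r) r)
    (hy' : ∀ r ∈ Set.Ioi (0:ℝ), HasDerivAt y' (y'' r) r)
    (hv : ∀ r ∈ Set.Ioi (0:ℝ), HasDerivAt v (v' r) r)
    (hv' : ∀ r ∈ Set.Ioi (0:ℝ), HasDerivAt v' (v'' r) r)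
    (hV : ∀ r ∈ Set.Ioi (0:ℝ),
      v'' r + v' r / r - v r / r ^ 2
        + 2 * (2 * y' r * u r + y r * u' r + y r * u r / r)
        - 4 * v r * u r ^ 2 - γ * v r * s r ^ 2 = 0)
    (hU : ∀ r ∈ Set.Ioi (0:ℝ),
      v' r * y r - v r * y' r
        + (2 * y r ^ 2 + γ / 2 * s r ^ 2 + 2 * v r ^ 2) * u r = 0)
    (hY : ∀ r ∈ Set.Ioi (0:ℝ),
      y'' r + y' r / r - y r / r ^ 2
        - 2 * (1 - α) * (2 * v' r * u r + v r * u' r + v r * u r / r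
            + 2 * y r * u r ^ 2)
        - γ * (y r - x r) * s r ^ 2 = 0) :
    ∀ r ∈ Set.Ioi (0:ℝ),
      HasDerivAt (fun t => t * u t * (γ * s t ^ 2 + 4 * α * v t ^ 2))
        (-(2 * r * (γ * x r * s r ^ 2 + 4 * α * y r * u r ^ 2) * v r)) r := by
  intro r hr
  have h_eliminate_s : (fun t => t * u t * (γ * s t ^ 2 + 4 * α * v t ^ 2)) =ᶠ[𝓝 r]
      fun t => t * (4 * α * v t ^ 2 * u t - 2 * (v' t * y t - v t * y' t)
        - 4 * (y t ^ 2 + v t ^ 2) * u t) := by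
    filter_upwards [isOpen_Ioi.mem_nhds hr] with t ht
    linear_combination 2 * t * hU t ht
  refine ((hasDerivAt_mul_wronskian_combination α (hu r hr) (hv r hr) (hv' r hr) (hy r hr)
    (hy' r hr)).congr_of_eventuallyEq h_eliminate_s).congr_deriv ?_
  have hr0 : r ≠ 0 := ne_of_gt hr
  linear_combination (norm := (field_simp; ring)) -2 * r * y r * hV r hr + 2 * r * v r * hY r hr
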